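/- Let H ∈ (0, 1/2), let (B^H_t)_{t≥0} be a fractional Brownian motion with Hurst index H having continuous sample paths, and let a ∈ ℝ, σ > 0, Y₀ > 0. For each k > 0 let Y^{(k)} be a stochastic process such that for almost every ω the path t ↦ Y^{(k)}_t(ω) is a stopped solution with parameter k driven by the path t ↦ B^H_t(ω) starting from Y₀, and suppose that for every T > 0 the set A_k(T) = {ω : Y^{(k)}_t(ω) > 0 for all t ∈ [0,T]} is measurable. Then for every T > 0, P(A_k(T)) → 1 as k → ∞. -/

import Mathlib

/-!
Everything happens path by path. On `[0, T]` a continuous driving path satisfies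
`|B t - B s| ≤ ε + L |t - s|` for any `ε > 0` and some `L` (uniform continuity plus boundedness).
If a stopped solution vanished before `T`, take its last passage `s` through `Y₀ / 2` before the
hitting time and a later passage `t` through `Y₀ / 4`. On `[s, t]` the drift `k / Y - a Y` is at
least `2k / Y₀ - |a| Y₀ / 2`, so `Y t - Y s ≥ -σ ε / 2 > -Y₀ / 4` once `k` is large: a
contradiction (for `σ ε < Y₀ / 2`). Thus every path lies in `{every solution with parameter
k ≥ n stays positive}` for large `n`, and continuity of `ℙ` from below gives the limit.
-/

open MeasureTheory Filter
open scoped ProbabilityTheory ENNReal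

/-- A fractional Brownian motion with Hurst index `H ∈ (0,1)` on a probability space `Ω`:
a measurable-in-`ω`, centered Gaussian process `B` (every finite linear combination of
values at nonnegative times is Gaussian) with `B 0 = 0` a.s. and covariance
`E[B s · B t] = (s^{2H} + t^{2H} − |t − s|^{2H})/2` for `s, t ≥ 0`. -/
def IsFractionalBrownianMotion {Ω : Type*} [MeasureSpace Ω] (H : ℝ) (B : ℝ → Ω → ℝ) :
    Prop :=
  (∀ t : ℝ, 0 ≤ t → Measurable (B t)) ∧
  (∀ (n : ℕ) (t : Fin n → ℝ) (c : Fin n → ℝ), (∀ i, 0 ≤ t i) →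
    ∃ (m : ℝ) (v : NNReal),
      Measure.map (fun ω => ∑ i, c i * B (t i) ω) ℙ = ProbabilityTheory.gaussianReal m v) ∧
  (∀ᵐ ω, B 0 ω = 0) ∧
  (∀ t : ℝ, 0 ≤ t → ∫ ω, B t ω = 0) ∧
  (∀ s t : ℝ, 0 ≤ s → 0 ≤ t →
    ∫ ω, B s ω * B t ω = (s ^ (2 * H) + t ^ (2 * H) - |t - s| ^ (2 * H)) / 2)

/-- The first zero-hitting time `τ = inf{t ≥ 0 : Y t = 0}` of a path `Y`, as an extended
nonnegative real (with `τ = ∞` if `Y` never vanishes on `[0,∞)`). -/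
noncomputable def zeroHitTime (Y : ℝ → ℝ) : ℝ≥0∞ :=
  ⨅ t ∈ {t : ℝ | 0 ≤ t ∧ Y t = 0}, ENNReal.ofReal t

/-- A stopped solution of `dY = (1/2)(k/Y − aY) dt + (σ/2) dB`, `Y 0 = Y₀`, driven by the
path `B`: a continuous function on `[0,∞)` satisfying the integral equation before its
first zero-hitting time `τ` and vanishing from `τ` onwards. -/
def IsStoppedSolution (B : ℝ → ℝ) (k a σ Y₀ : ℝ) (Y : ℝ → ℝ) : Prop :=
  ContinuousOn Y (Set.Ici 0) ∧ Y 0 = Y₀ ∧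
  (∀ t : ℝ, 0 ≤ t → ENNReal.ofReal t < zeroHitTime Y →
    Y t = Y₀ + (1 / 2) * (∫ s in (0:ℝ)..t, (k / Y s - a * Y s)) + (σ / 2) * B t) ∧
  (∀ t : ℝ, 0 ≤ t → zeroHitTime Y ≤ ENNReal.ofReal t → Y t = 0)

theorem IsCompact.exists_dist_le_add_mul_dist {X E : Type*} [PseudoMetricSpace X]
    [PseudoMetricSpace E] {K : Set X} (hK : IsCompact K) {f : X → E} (hf : ContinuousOn f K)
    {ε : ℝ} (hε : 0 < ε) :
    ∃ L, ∀ x ∈ K, ∀ y ∈ K, dist (f x) (f y) ≤ ε + L * dist x y := by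
  obtain ⟨η, hη, hclose⟩ :=
    Metric.uniformContinuousOn_iff.mp (hK.uniformContinuousOn_of_continuous hf) ε hε
  obtain ⟨C, hC⟩ := Metric.isBounded_iff.mp (hK.image_of_continuousOn hf).isBounded
  refine ⟨max C 0 / η, fun x hx y hy => ?_⟩
  rcases lt_or_ge (dist x y) η with hxy | hxy
  · have : 0 ≤ max C 0 / η * dist x y := by positivity
    linarith [hclose x hx y hy hxy]
  · calc dist (f x) (f y) ≤ max C 0 := (hC (Set.mem_image_of_mem f hx)
          (Set.mem_image_of_mem f hy)).trans (le_max_left _ _)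
      _ = max C 0 / η * η := by field_simp
      _ ≤ ε + max C 0 / η * dist x y := by
          nlinarith [mul_le_mul_of_nonneg_left hxy (by positivity : 0 ≤ max C 0 / η)]

theorem zeroHitTime_le {Y : ℝ → ℝ} {t : ℝ} (ht : 0 ≤ t) (hYt : Y t = 0) :
    zeroHitTime Y ≤ ENNReal.ofReal t :=
  iInf₂_le t ⟨ht, hYt⟩

theorem exists_last_eq_of_le_of_ge {Y : ℝ → ℝ} {a b c : ℝ} (hab : a ≤ b)
    (hY : ContinuousOn Y (Set.Icc a b)) (ha : c ≤ Y a) (hb : Y b ≤ c) :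
    ∃ s ∈ Set.Icc a b, Y s = c ∧ ∀ u ∈ Set.Icc s b, Y u ≤ c := by
  have hlevel : IsCompact (Set.Icc a b ∩ Y ⁻¹' {c}) :=
    isCompact_Icc.of_isClosed_subset
      (hY.preimage_isClosed_of_isClosed isClosed_Icc isClosed_singleton) Set.inter_subset_left
  obtain ⟨s, ⟨hs, hYs⟩, hlast⟩ :=
    hlevel.exists_isGreatest (intermediate_value_Icc' hab hY ⟨hb, ha⟩)
  refine ⟨s, hs, hYs, fun u hu => le_of_not_gt fun hYu => ?_⟩
  obtain ⟨v, hv, hYv⟩ := intermediate_value_Icc' hu.2 (hY.mono (Set.Icc_subset_Icc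
    (hs.1.trans hu.1) le_rfl)) ⟨hb, hYu.le⟩
  have hsv : v ≤ s := hlast ⟨⟨hs.1.trans (hu.1.trans hv.1), hv.2⟩, hYv⟩
  have hsu : s < u := lt_of_le_of_ne hu.1 (by rintro rfl; exact hYu.ne' hYs)
  linarith [hv.1]

namespace IsStoppedSolution

variable {B Y : ℝ → ℝ} {k a σ Y₀ : ℝ}

theorem zeroHitTime_le_of_nonpos (hY : IsStoppedSolution B k a σ Y₀ Y) (hY₀ : 0 < Y₀)
    {t : ℝ} (ht : 0 ≤ t) (hYt : Y t ≤ 0) : zeroHitTime Y ≤ ENNReal.ofReal t := by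
  obtain ⟨u, hu, hYu⟩ := intermediate_value_Icc' ht (hY.1.mono Set.Icc_subset_Ici_self)
    ⟨hYt, hY.2.1 ▸ hY₀.le⟩
  exact (zeroHitTime_le hu.1 hYu).trans (ENNReal.ofReal_le_ofReal hu.2)

theorem pos_of_lt_zeroHitTime (hY : IsStoppedSolution B k a σ Y₀ Y) (hY₀ : 0 < Y₀)
    {t : ℝ} (ht : 0 ≤ t) (hτ : ENNReal.ofReal t < zeroHitTime Y) : 0 < Y t :=
  lt_of_not_ge fun hYt => (hY.zeroHitTime_le_of_nonpos hY₀ ht hYt).not_gt hτ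

theorem zeroHitTime_ne_zero (hY : IsStoppedSolution B k a σ Y₀ Y) (hY₀ : 0 < Y₀) :
    zeroHitTime Y ≠ 0 := fun h =>
  hY₀.ne' (hY.2.1 ▸ hY.2.2.2 0 le_rfl (by simp [h]))

theorem apply_toReal_zeroHitTime (hY : IsStoppedSolution B k a σ Y₀ Y)
    (hτ : zeroHitTime Y ≠ ⊤) : Y (zeroHitTime Y).toReal = 0 :=
  hY.2.2.2 _ ENNReal.toReal_nonneg (ENNReal.ofReal_toReal hτ).ge

theorem le_sub_of_forall_mem_Icc_le (hY : IsStoppedSolution B k a σ Y₀ Y) (hY₀ : 0 < Y₀)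
    (hk : 0 ≤ k) {s t δ : ℝ} (hs : 0 ≤ s) (hst : s ≤ t) (ht : ENNReal.ofReal t < zeroHitTime Y)
    (hle : ∀ u ∈ Set.Icc s t, Y u ≤ δ) :
    (k / δ - |a| * δ) * (t - s) / 2 + σ / 2 * (B t - B s) ≤ Y t - Y s := by
  set f : ℝ → ℝ := fun u => k / Y u - a * Y u
  have hpos : ∀ u ∈ Set.Icc 0 t, 0 < Y u := fun u hu =>
    hY.pos_of_lt_zeroHitTime hY₀ hu.1 ((ENNReal.ofReal_le_ofReal hu.2).trans_lt ht)
  have hf : ContinuousOn f (Set.Icc 0 t) := by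
    have hYc : ContinuousOn Y (Set.Icc 0 t) := hY.1.mono Set.Icc_subset_Ici_self
    exact (continuousOn_const.div hYc fun u hu => (hpos u hu).ne').sub
      (continuousOn_const.mul hYc)
  have hint : ∀ x y, 0 ≤ x → x ≤ y → y ≤ t → IntervalIntegrable f volume x y :=
    fun x y hx hxy hy =>
      (hf.mono (Set.uIcc_of_le hxy ▸ Set.Icc_subset_Icc hx hy)).intervalIntegrable
  have hsplit : Y t - Y s = (∫ u in s..t, f u) / 2 + σ / 2 * (B t - B s) := by
    rw [hY.2.2.1 s hs ((ENNReal.ofReal_le_ofReal hst).trans_lt ht), hY.2.2.1 t (hs.trans hst) ht,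
      ← intervalIntegral.integral_add_adjacent_intervals (hint 0 s le_rfl hs hst)
        (hint s t hs hst le_rfl)]
    ring
  have hf_ge : ∀ u ∈ Set.Icc s t, k / δ - |a| * δ ≤ f u := by
    intro u hu
    have hYu : 0 < Y u := hpos u ⟨hs.trans hu.1, hu.2⟩
    have hdrift : a * Y u ≤ |a| * δ :=
      (mul_le_mul_of_nonneg_right (le_abs_self a) hYu.le).trans
        (mul_le_mul_of_nonneg_left (hle u hu) (abs_nonneg a))
    have := div_le_div_of_nonneg_left hk hYu (hle u hu)
    simp only [f]
    linarith
  have hint_ge := intervalIntegral.integral_mono_on hst intervalIntegrable_const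
    (hint s t hs hst le_rfl) hf_ge
  rw [intervalIntegral.integral_const, smul_eq_mul] at hint_ge
  linarith

theorem pos_of_abs_sub_le_add_mul (hY : IsStoppedSolution B k a σ Y₀ Y) (hσ : 0 ≤ σ) (hY₀ : 0 < Y₀)
    {T ε L : ℝ} (hε : σ * ε < Y₀ / 2)
    (hB : ∀ s ∈ Set.Icc 0 T, ∀ t ∈ Set.Icc 0 T, |B t - B s| ≤ ε + L * |t - s|)
    (hk₀ : 0 ≤ k) (hk : Y₀ / 2 * (σ * L + |a| * (Y₀ / 2)) ≤ k) :
    ∀ t ∈ Set.Icc 0 T, 0 < Y t := by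
  by_contra! ⟨t₀, ht₀, hYt₀⟩
  have hτt₀ := hY.zeroHitTime_le_of_nonpos hY₀ ht₀.1 hYt₀
  have hτ_top : zeroHitTime Y ≠ ⊤ := ne_top_of_le_ne_top ENNReal.ofReal_ne_top hτt₀
  set τ := (zeroHitTime Y).toReal
  have hτ : ENNReal.ofReal τ = zeroHitTime Y := ENNReal.ofReal_toReal hτ_top
  have hτT : τ ≤ T := (ENNReal.toReal_le_of_le_ofReal ht₀.1 hτt₀).trans ht₀.2
  have hτ₀ : 0 < τ := ENNReal.toReal_pos (hY.zeroHitTime_ne_zero hY₀) hτ_top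
  have hYτ : Y τ = 0 := hY.apply_toReal_zeroHitTime hτ_top
  have hYc : ContinuousOn Y (Set.Icc 0 τ) := hY.1.mono Set.Icc_subset_Ici_self
  obtain ⟨s, hs, hYs, hYle⟩ := exists_last_eq_of_le_of_ge (c := Y₀ / 2) hτ₀.le hYc
    (by rw [hY.2.1]; linarith) (by rw [hYτ]; positivity)
  obtain ⟨t, ht, hYt⟩ := intermediate_value_Icc' hs.2 (hYc.mono (Set.Icc_subset_Icc hs.1 le_rfl))
    (show Y₀ / 2 / 2 ∈ Set.Icc (Y τ) (Y s) by constructor <;> linarith)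
  have htτ : t < τ := lt_of_le_of_ne ht.2 (by rintro rfl; linarith)
  have hincr := hY.le_sub_of_forall_mem_Icc_le hY₀ hk₀ hs.1 ht.1
    (hτ ▸ (ENNReal.ofReal_lt_ofReal_iff hτ₀).2 htτ) fun u hu => hYle u ⟨hu.1, hu.2.trans ht.2⟩
  have hBts := hB s ⟨hs.1, hs.2.trans hτT⟩ t ⟨hs.1.trans ht.1, htτ.le.trans hτT⟩
  rw [abs_of_nonneg (sub_nonneg.2 ht.1)] at hBts
  have hdrift : σ * L ≤ k / (Y₀ / 2) - |a| * (Y₀ / 2) := by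
    rw [le_sub_iff_add_le, le_div_iff₀ (by positivity)]; linarith
  nlinarith [mul_le_mul_of_nonneg_right hdrift (sub_nonneg.2 ht.1), neg_abs_le (B t - B s),
    mul_le_mul_of_nonneg_left (neg_le_neg hBts) hσ]

end IsStoppedSolution

theorem eventually_forall_isStoppedSolution_pos {B : ℝ → ℝ} {a σ Y₀ T : ℝ}
    (hB : ContinuousOn B (Set.Icc 0 T)) (hσ : 0 < σ) (hY₀ : 0 < Y₀) :
    ∀ᶠ k in atTop, ∀ Y, IsStoppedSolution B k a σ Y₀ Y → ∀ t ∈ Set.Icc 0 T, 0 < Y t := by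
  obtain ⟨L, hL⟩ := isCompact_Icc.exists_dist_le_add_mul_dist hB
    (by positivity : 0 < Y₀ / (4 * σ))
  filter_upwards [eventually_ge_atTop 0,
    eventually_ge_atTop (Y₀ / 2 * (σ * L + |a| * (Y₀ / 2)))] with k hk₀ hk Y hY
  refine hY.pos_of_abs_sub_le_add_mul hσ.le hY₀ (ε := Y₀ / (4 * σ)) ?_
    (fun s hs t ht => by simpa only [Real.dist_eq] using hL t ht s hs) hk₀ hk
  rw [mul_div_assoc', mul_comm 4 σ, mul_div_mul_left _ _ hσ.ne']
  linarith

theorem fCIR_prob_no_zero_hitting_tendsto_one_general (Ω : Type*) [MeasureSpace Ω]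
    [IsProbabilityMeasure (ℙ : Measure Ω)]
    (B : ℝ → Ω → ℝ)
    (hBcont : ∀ ω, Continuous fun t => B t ω)
    (a σ Y₀ : ℝ) (hσ : 0 < σ) (hY₀ : 0 < Y₀)
    (Y : ℝ → ℝ → Ω → ℝ)
    (hY : ∀ k : ℝ, 0 < k →
      ∀ᵐ ω, IsStoppedSolution (fun t => B t ω) k a σ Y₀ (fun t => Y k t ω)) :
    ∀ T : ℝ, 0 < T →
      Tendsto (fun k : ℝ => ℙ {ω | ∀ t ∈ Set.Icc (0:ℝ) T, 0 < Y k t ω}) atTop (nhds 1) := by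
  intro T _
  set G : ℕ → Set Ω := fun n => {ω | ∀ k ≥ (n : ℝ), ∀ Z, IsStoppedSolution (fun t => B t ω)
    k a σ Y₀ Z → ∀ t ∈ Set.Icc 0 T, 0 < Z t}
  have hG_mono : Monotone G := fun n m hnm ω hω k hk =>
    hω k ((Nat.cast_le.2 hnm).trans hk)
  have hG_univ : ⋃ n, G n = Set.univ := Set.eq_univ_of_forall fun ω => by
    obtain ⟨K, hK⟩ := eventually_atTop.1
      (eventually_forall_isStoppedSolution_pos (hBcont ω).continuousOn hσ hY₀ (a := a) (T := T))
    obtain ⟨n, hn⟩ := exists_nat_ge K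
    exact Set.mem_iUnion.2 ⟨n, fun k hk => hK k (hn.trans hk)⟩
  -- no measurability of `G n` is needed: continuity from below holds for the outer measure
  have hG_lim : Tendsto (ℙ ∘ G) atTop (nhds 1) := by
    simpa only [hG_univ, measure_univ] using tendsto_measure_iUnion_atTop (μ := ℙ) hG_mono
  refine tendsto_of_tendsto_of_tendsto_of_le_of_le' (hG_lim.comp tendsto_nat_floor_atTop)
    tendsto_const_nhds ?_ (Eventually.of_forall fun _ => prob_le_one)
  filter_upwards [eventually_gt_atTop 0] with k hk
  refine measure_mono_ae ?_
  filter_upwards [hY k hk] with ω hω hG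
  exact hG k (Nat.floor_le hk.le) _ hω

/-- Theorem 4.2: for `H ∈ (0, 1/2)` and stopped solutions `Y^{(k)}` of the
fractional CIR square-root equation driven by a fractional Brownian motion with continuous
paths, the probability `P(Y^{(k)}_t > 0 for all t ∈ [0,T])` tends to `1` as `k → ∞`, for
every `T > 0`. -/
theorem fCIR_prob_no_zero_hitting_tendsto_one (Ω : Type*) [MeasureSpace Ω]
    [IsProbabilityMeasure (ℙ : Measure Ω)]
    (H : ℝ) (hH0 : 0 < H) (hH1 : H < 1 / 2) (B : ℝ → Ω → ℝ)
    (hB : IsFractionalBrownianMotion H B)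
    (hBcont : ∀ ω, Continuous fun t => B t ω)
    (a σ Y₀ : ℝ) (hσ : 0 < σ) (hY₀ : 0 < Y₀)
    (Y : ℝ → ℝ → Ω → ℝ)
    (hY : ∀ k : ℝ, 0 < k →
      ∀ᵐ ω, IsStoppedSolution (fun t => B t ω) k a σ Y₀ (fun t => Y k t ω))
    (hmeas : ∀ T : ℝ, 0 < T → ∀ k : ℝ, 0 < k →
      MeasurableSet {ω | ∀ t ∈ Set.Icc (0:ℝ) T, 0 < Y k t ω}) :
    ∀ T : ℝ, 0 < T →
      Tendsto (fun k : ℝ => ℙ {ω | ∀ t ∈ Set.Icc (0:ℝ) T, 0 < Y k t ω}) atTop (nhds 1) :=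
  fCIR_prob_no_zero_hitting_tendsto_one_general Ω B hBcont a σ Y₀ hσ hY₀ Y hY
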